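/- Every draft rule φ^π is Pareto efficient with respect to pairwise dominance: for every problem (≿, X) there is no allocation B of objects in X with B ≠ φ^π(≿, X) and B_i ≿_i^PD φ^π_i(≿, X) for all agents i. -/

import Mathlib

/-!
Let `A` be the draft allocation and `B` an allocation with `B i ≿PD A i` for every agent, witnessed
by injections `g i : A i → B i` with `g i x ≿ x`. By strong induction on the step `k`, the agent
picking at step `k` has `g (pick k) = pick k`: each earlier pick is, by induction, fixed by its own
agent's injection, so it lies in that agent's `B`-bundle, and hence (by disjointness of `B`, or by
injectivity for the same agent) it is not `g (pick k)`. So `g (pick k)` was still available at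
step `k`, is therefore no better than the pick, and equals it by antisymmetry. Hence `A i ⊆ B i`
for all `i`; since `A` exhausts `X` and `B` is a disjoint family inside `X`, `B = A`.
-/

open Finset

noncomputable section

abbrev Obj := ℕ

def PD (r : Obj → Obj → Prop) (S T : Finset Obj) : Prop :=
  ∃ μ : {x // x ∈ T} → {x // x ∈ S}, Function.Injective μ ∧ ∀ x, r (μ x).1 x.1

def StrictPD (r : Obj → Obj → Prop) (S T : Finset Obj) : Prop :=
  PD r S T ∧ ¬ PD r T S

def LinProfile {n : ℕ} (pref : Fin n → Obj → Obj → Prop) : Prop :=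
  ∀ i, IsLinearOrder Obj (pref i)

def IsAlloc {n : ℕ} (A : Fin n → Finset Obj) (X : Finset Obj) : Prop :=
  (∀ i, A i ⊆ X) ∧ ∀ i j, i ≠ j → Disjoint (A i) (A j)

open Classical in
def topOf (r : Obj → Obj → Prop) (X : Finset Obj) : Obj :=
  if h : ∃ m ∈ X, ∀ x ∈ X, r m x then h.choose else 0

def remaining {n : ℕ} (pref : Fin n → Obj → Obj → Prop) (f : ℕ → Fin n)
    (X : Finset Obj) : ℕ → Finset Obj
  | 0 => X
  | k + 1 => (remaining pref f X k).erase (topOf (pref (f k)) (remaining pref f X k))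

def draft {n : ℕ} (pref : Fin n → Obj → Obj → Prop) (f : ℕ → Fin n)
    (X : Finset Obj) (i : Fin n) : Finset Obj :=
  ((Finset.range X.card).filter (fun k => f k = i)).image
    (fun k => topOf (pref (f k)) (remaining pref f X k))

def roundRobin {n : ℕ} (hn : 0 < n) (π : Equiv.Perm (Fin n)) (k : ℕ) : Fin n :=
  π.symm ⟨k % n, Nat.mod_lt k hn⟩

def draftPi {n : ℕ} (hn : 0 < n) (pref : Fin n → Obj → Obj → Prop)
    (π : Equiv.Perm (Fin n)) (X : Finset Obj) (i : Fin n) : Finset Obj :=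
  draft pref (roundRobin hn π) X i



theorem Finset.Nonempty.exists_forall_rel {α : Type*} (r : α → α → Prop) [IsTrans α r]
    [Std.Total r] {S : Finset α} (hS : S.Nonempty) : ∃ m ∈ S, ∀ x ∈ S, r m x := by
  induction hS using Finset.Nonempty.cons_induction with
  | singleton a => exact ⟨a, mem_singleton_self a, by simp [refl_of r a]⟩
  | cons a s _ _ ih =>
    obtain ⟨m, hm, hmin⟩ := ih
    rcases total_of r a m with ham | hma
    · refine ⟨a, mem_cons_self a s, ?_⟩
      simpa [refl_of r a] using fun x hx => trans_of r ham (hmin x hx)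
    · exact ⟨m, mem_cons_of_mem hm, by simpa [hma] using hmin⟩

section topOf

variable (r : Obj → Obj → Prop) [IsTrans Obj r] [Std.Total r] {S : Finset Obj}

theorem topOf_mem (hS : S.Nonempty) : topOf r S ∈ S := by
  rw [topOf, dif_pos (hS.exists_forall_rel r)]
  exact (hS.exists_forall_rel r).choose_spec.1

theorem rel_topOf (hS : S.Nonempty) {x : Obj} (hx : x ∈ S) : r (topOf r S) x := by
  rw [topOf, dif_pos (hS.exists_forall_rel r)]
  exact (hS.exists_forall_rel r).choose_spec.2 x hx

end topOf

theorem PD.exists_injOn {r : Obj → Obj → Prop} {S T : Finset Obj} (h : PD r S T) :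
    ∃ g : Obj → Obj, Set.MapsTo g T S ∧ Set.InjOn g T ∧ ∀ x ∈ T, r (g x) x := by
  classical
  obtain ⟨μ, hinj, hr⟩ := h
  refine ⟨fun x => if hx : x ∈ T then μ ⟨x, hx⟩ else x, fun x hx => ?_, fun x hx y hy hxy => ?_,
    fun x hx => ?_⟩
  · simp only [mem_coe] at hx
    simp [hx]
  · simp only [mem_coe] at hx hy
    simp only [dif_pos hx, dif_pos hy] at hxy
    exact congrArg Subtype.val (hinj (Subtype.ext hxy))
  · simpa [hx] using hr ⟨x, hx⟩

theorem IsAlloc.eq_of_subset {n : ℕ} {A B : Fin n → Finset Obj} {X : Finset Obj}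
    (hB : IsAlloc B X) (hAX : ∀ x ∈ X, ∃ i, x ∈ A i) (hAB : ∀ i, A i ⊆ B i) : B = A := by
  funext i
  refine Subset.antisymm (fun x hx => ?_) (hAB i)
  obtain ⟨j, hj⟩ := hAX x (hB.1 i hx)
  obtain rfl : j = i := by
    by_contra hji
    exact disjoint_left.mp (hB.2 j i hji) (hAB j hj) hx
  exact hj

section draft

variable {n : ℕ} (pref : Fin n → Obj → Obj → Prop) (f : ℕ → Fin n) (X : Finset Obj)

def draftPick (k : ℕ) : Obj := topOf (pref (f k)) (remaining pref f X k)

theorem mem_remaining_iff {k : ℕ} {x : Obj} :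
    x ∈ remaining pref f X k ↔ x ∈ X ∧ ∀ j < k, draftPick pref f X j ≠ x := by
  induction k with
  | zero => simp [remaining]
  | succ k ih =>
    rw [remaining, mem_erase, ih, ← draftPick]
    simp only [Nat.lt_succ_iff_lt_or_eq, or_imp, forall_and, forall_eq]
    tauto

theorem mem_draft_iff {i : Fin n} {x : Obj} :
    x ∈ draft pref f X i ↔ ∃ k < X.card, f k = i ∧ draftPick pref f X k = x := by
  simp only [draft, mem_image, mem_filter, mem_range, and_assoc, draftPick]

variable {pref}

theorem card_remaining (hpref : LinProfile pref) {k : ℕ} (hk : k ≤ X.card) :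
    (remaining pref f X k).card = X.card - k := by
  induction k with
  | zero => rfl
  | succ k ih =>
    have hcard := ih (by omega)
    have hne : (remaining pref f X k).Nonempty := by rw [← card_pos, hcard]; omega
    have := hpref (f k)
    rw [remaining, card_erase_of_mem (topOf_mem _ hne), hcard]
    omega

theorem remaining_nonempty (hpref : LinProfile pref) {k : ℕ} (hk : k < X.card) :
    (remaining pref f X k).Nonempty := by
  rw [← card_pos, card_remaining f X hpref hk.le]
  omega

theorem draftPick_mem_remaining (hpref : LinProfile pref) {k : ℕ} (hk : k < X.card) :
    draftPick pref f X k ∈ remaining pref f X k :=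
  haveI := hpref (f k)
  topOf_mem _ (remaining_nonempty f X hpref hk)

theorem rel_draftPick (hpref : LinProfile pref) {k : ℕ} (hk : k < X.card) {y : Obj}
    (hy : y ∈ remaining pref f X k) :
    pref (f k) (draftPick pref f X k) y :=
  haveI := hpref (f k)
  rel_topOf _ (remaining_nonempty f X hpref hk) hy

theorem draftPick_ne (hpref : LinProfile pref) {j k : ℕ} (hjk : j < k) (hk : k < X.card) :
    draftPick pref f X j ≠ draftPick pref f X k :=
  ((mem_remaining_iff pref f X).mp (draftPick_mem_remaining f X hpref hk)).2 j hjk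

theorem exists_mem_draft (hpref : LinProfile pref) {x : Obj} (hx : x ∈ X) :
    ∃ i, x ∈ draft pref f X i := by
  have hx' : x ∉ remaining pref f X X.card := by
    have hempty : (remaining pref f X X.card).card = 0 := by
      rw [card_remaining f X hpref le_rfl, Nat.sub_self]
    rw [card_eq_zero.mp hempty]
    exact notMem_empty x
  simp only [mem_remaining_iff, hx, true_and, not_forall, not_not] at hx'
  obtain ⟨k, hk, rfl⟩ := hx'
  exact ⟨f k, (mem_draft_iff pref f X).mpr ⟨k, hk, rfl, rfl⟩⟩

theorem apply_draftPick_eq_self (hpref : LinProfile pref) {B : Fin n → Finset Obj}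
    (hB : IsAlloc B X) {g : Fin n → Obj → Obj}
    (hmaps : ∀ i, Set.MapsTo (g i) (draft pref f X i) (B i))
    (hinj : ∀ i, Set.InjOn (g i) (draft pref f X i))
    (hrel : ∀ i, ∀ x ∈ draft pref f X i, pref i (g i x) x) {k : ℕ} (hk : k < X.card) :
    g (f k) (draftPick pref f X k) = draftPick pref f X k := by
  induction k using Nat.strong_induction_on with
  | _ k ih =>
    have mem_draft : ∀ {j}, j < X.card → draftPick pref f X j ∈ draft pref f X (f j) :=
      fun hj => (mem_draft_iff pref f X).mpr ⟨_, hj, rfl, rfl⟩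
    have hgB : g (f k) (draftPick pref f X k) ∈ B (f k) := hmaps _ (mem_draft hk)
    have hg_remaining : g (f k) (draftPick pref f X k) ∈ remaining pref f X k := by
      refine (mem_remaining_iff pref f X).mpr ⟨hB.1 _ hgB, fun j hjk hj => ?_⟩
      have hfix := ih j hjk (hjk.trans hk)
      by_cases hfj : f j = f k
      · rw [← hfj] at hj
        refine draftPick_ne f X hpref hjk hk (hinj (f j) (mem_draft (hjk.trans hk)) ?_ ?_)
        · rw [hfj]; exact mem_draft hk
        · rw [hfix, hj]
      · have hjB : draftPick pref f X j ∈ B (f j) := hfix ▸ hmaps _ (mem_draft (hjk.trans hk))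
        exact disjoint_left.mp (hB.2 _ _ hfj) hjB (hj ▸ hgB)
    have := hpref (f k)
    exact antisymm (hrel _ _ (mem_draft hk)) (rel_draftPick f X hpref hk hg_remaining)

theorem eq_draft_of_PD (hpref : LinProfile pref) {B : Fin n → Finset Obj} (hB : IsAlloc B X)
    (hPD : ∀ i, PD (pref i) (B i) (draft pref f X i)) : B = draft pref f X := by
  choose g hmaps hinj hrel using fun i => (hPD i).exists_injOn
  refine hB.eq_of_subset (fun x hx => exists_mem_draft f X hpref hx) fun i x hx => ?_
  obtain ⟨k, hk, rfl, rfl⟩ := (mem_draft_iff pref f X).mp hx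
  rw [← apply_draftPick_eq_self f X hpref hB hmaps hinj hrel hk]
  exact hmaps _ hx

end draft

theorem draft_efficient_general {n : ℕ} (hn : 0 < n) (π : Equiv.Perm (Fin n))
    (pref : Fin n → Obj → Obj → Prop) (hpref : LinProfile pref)
    (X : Finset Obj) :
    ¬ ∃ B : Fin n → Finset Obj, IsAlloc B X ∧ B ≠ draftPi hn pref π X ∧
      ∀ i, PD (pref i) (B i) (draftPi hn pref π X i) := by
  rintro ⟨B, hB, hne, hPD⟩
  exact hne (eq_draft_of_PD _ X hpref hB hPD)

theorem draft_efficient {n : ℕ} (hn : 0 < n) (π : Equiv.Perm (Fin n))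
    (pref : Fin n → Obj → Obj → Prop) (hpref : LinProfile pref)
    (X : Finset Obj) (hX : X.Nonempty) :
    ¬ ∃ B : Fin n → Finset Obj, IsAlloc B X ∧ B ≠ draftPi hn pref π X ∧
      ∀ i, PD (pref i) (B i) (draftPi hn pref π X i) :=
  draft_efficient_general hn π pref hpref X
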